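/- arXiv:math/0502004 — 5 statements merged into one kernel-verified Lean document; each statement's English description precedes it below -/
import Mathlib

section
/- For coprime positive integers p and q, the rational function ((t^{pq}-1)(t-1))/((t^p-1)(t^q-1)) is a polynomial in t with integer coefficients. -/
open Polynomial

/-- For coprime positive integers p and q, ((t^{pq}-1)(t-1))/((t^p-1)(t^q-1)) is a
polynomial with integer coefficients (the Alexander polynomial of the (p,q) torus knot). -/
theorem torus_knot_alexander_is_polynomial (p q : ℕ) (hp : 0 < p) (hq : 0 < q)
    (hpq : Nat.Coprime p q) :
    ∃ P : Polynomial ℤ,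
      P * ((X ^ p - 1) * (X ^ q - 1)) = (X ^ (p * q) - 1) * (X - 1) := by
  have hinter : p.divisors ∩ q.divisors = {1} := by
    ext d
    simp only [Finset.mem_inter, Nat.mem_divisors, Finset.mem_singleton]
    constructor
    · rintro ⟨⟨hdp, -⟩, ⟨hdq, -⟩⟩
      exact Nat.eq_one_of_dvd_coprimes hpq hdp hdq
    · rintro rfl
      exact ⟨⟨one_dvd _, hp.ne'⟩, ⟨one_dvd _, hq.ne'⟩⟩
  have hsub : p.divisors ∪ q.divisors ⊆ (p * q).divisors := by
    intro d hd
    rcases Finset.mem_union.mp hd with h | h <;>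
    · rw [Nat.mem_divisors] at h ⊢
      exact ⟨h.1.trans (by first | exact Dvd.intro q rfl | exact Dvd.intro_left p rfl),
        Nat.mul_ne_zero hp.ne' hq.ne'⟩
  have hprod : (X ^ p - 1 : ℤ[X]) * (X ^ q - 1) =
      (∏ d ∈ p.divisors ∪ q.divisors, cyclotomic d ℤ) * (X - 1) := by
    rw [← prod_cyclotomic_eq_X_pow_sub_one hp ℤ, ← prod_cyclotomic_eq_X_pow_sub_one hq ℤ,
      ← Finset.prod_union_inter, hinter, Finset.prod_singleton, cyclotomic_one]
  obtain ⟨c, hc⟩ : (∏ d ∈ p.divisors ∪ q.divisors, cyclotomic d ℤ) ∣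
      (X ^ (p * q) - 1 : ℤ[X]) := by
    rw [← prod_cyclotomic_eq_X_pow_sub_one (Nat.mul_pos hp hq) ℤ]
    exact Finset.prod_dvd_prod_of_subset _ _ _ hsub
  exact ⟨c, by rw [hprod, hc]; ring⟩
end

section
/- For every integer p ≥ 2, the number of nonzero coefficients of the polynomial Δ_p(t) = ((t^{p(p+1)}-1)(t-1))/((t^{p+1}-1)(t^p-1)) is at least p. Consequently, the number of nonzero terms of Δ_p tends to infinity as p → ∞. -/
open Polynomial

private lemma torus_knot_coeff_one (q k : ℕ) (hk : k < q + 2) :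
    ((∑ j ∈ Finset.range (q+2), ((X:ℤ[X])^(q+2))^j)
      - X * (∑ j ∈ Finset.range (q+1), ((X:ℤ[X])^(q+3))^j)).coeff ((q+2)*k) = 1 := by
  rw [coeff_sub, Finset.mul_sum]
  simp only [← pow_mul, ← pow_succ']
  rw [finset_sum_coeff, finset_sum_coeff]
  simp only [coeff_X_pow]
  have e1 : (∑ x ∈ Finset.range (q + 2), if (q + 2) * k = (q + 2) * x then (1:ℤ) else 0) = 1 := by
    simp only [mul_right_inj' (show (q+2:ℕ) ≠ 0 by omega)]
    rw [Finset.sum_ite_eq (Finset.range (q+2)) k (fun _ => (1:ℤ))]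
    simp [Finset.mem_range.mpr hk]
  have e2 : (∑ x ∈ Finset.range (q + 1), if (q + 2) * k = (q + 3) * x + 1 then (1:ℤ) else 0) = 0 := by
    apply Finset.sum_eq_zero
    intro x hx
    rw [Finset.mem_range] at hx
    rw [if_neg]
    intro h
    have h1 : x + 1 ≤ k := by nlinarith
    have h2 : (q+2) * (x+1) ≤ (q+2) * k := Nat.mul_le_mul_left _ h1
    nlinarith
  rw [e1, e2]; ring

private lemma torus_knot_main (p : ℕ) (hp : 2 ≤ p) (P : Polynomial ℤ)
    (hP : P * ((X ^ (p + 1) - 1) * (X ^ p - 1)) = (X ^ (p * (p + 1)) - 1) * (X - 1)) :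
    p ≤ P.support.card := by
  obtain ⟨q, rfl⟩ : ∃ q, p = q + 2 := ⟨p - 2, by omega⟩
  set Q : ℤ[X] := (∑ j ∈ Finset.range (q+2), ((X:ℤ[X])^(q+2))^j)
      - X * (∑ j ∈ Finset.range (q+1), ((X:ℤ[X])^(q+3))^j) with hQdef
  have key : Q * ((X ^ (q + 2 + 1) - 1) * (X ^ (q+2) - 1))
      = (X ^ ((q+2) * (q + 2 + 1)) - 1) * (X - 1) := by
    have h1 := geom_sum_mul ((X:ℤ[X])^(q+2)) (q+2)
    have h2 := geom_sum_mul ((X:ℤ[X])^(q+3)) (q+1)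
    rw [hQdef]
    have e3 : q + 2 + 1 = q + 3 := rfl
    rw [e3]
    linear_combination (X^(q+3) - 1) * h1 - X * (X^(q+2) - 1) * h2
  have hne : ((X:ℤ[X]) ^ (q + 2 + 1) - 1) * (X ^ (q+2) - 1) ≠ 0 := by
    apply mul_ne_zero <;>
    · intro h
      have := congrArg (fun f => Polynomial.coeff f 0) h
      simp [coeff_X_pow] at this
  have hPQ : P = Q := by
    apply mul_right_cancel₀ hne
    rw [hP, key]
  have hsub : (Finset.range (q+2)).image (fun k => (q+2)*k) ⊆ P.support := by
    intro n hn
    rw [Finset.mem_image] at hn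
    obtain ⟨k, hk, rfl⟩ := hn
    rw [Finset.mem_range] at hk
    rw [mem_support_iff, hPQ, torus_knot_coeff_one q k hk]
    exact one_ne_zero
  calc q + 2 = ((Finset.range (q+2)).image (fun k => (q+2)*k)).card := by
        rw [Finset.card_image_of_injective _ (mul_right_injective₀ (show (q+2:ℕ) ≠ 0 by omega)),
          Finset.card_range]
    _ ≤ P.support.card := Finset.card_le_card hsub

/-- For p ≥ 2, the Alexander polynomial of T(p,p+1), i.e. the polynomial
Δ_p(t) = ((t^{p(p+1)}-1)(t-1))/((t^{p+1}-1)(t^p-1)), has at least p nonzero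
coefficients; consequently the number of nonzero terms tends to infinity with p. -/
theorem torus_knot_alexander_support_grows :
    (∀ p : ℕ, 2 ≤ p → ∀ P : Polynomial ℤ,
      P * ((X ^ (p + 1) - 1) * (X ^ p - 1)) = (X ^ (p * (p + 1)) - 1) * (X - 1) →
      p ≤ P.support.card) ∧
    (∀ N : ℕ, ∃ p₀ : ℕ, ∀ p : ℕ, p₀ ≤ p → 2 ≤ p → ∀ P : Polynomial ℤ,
      P * ((X ^ (p + 1) - 1) * (X ^ p - 1)) = (X ^ (p * (p + 1)) - 1) * (X - 1) →
      N ≤ P.support.card) := by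
  refine ⟨torus_knot_main, fun N => ⟨N, fun p hp hp2 P hP => ?_⟩⟩
  exact hp.trans (torus_knot_main p hp2 P hP)
end

section
/- For every integer p ≥ 2, all coefficients of the polynomial ((t^{p(p+1)}-1)(t-1))/((t^{p+1}-1)(t^p-1)) lie in {-1, 0, 1}. -/
/-!
Since `p * (m + 1) = (p - m) + (p + 1) * m`, reducing the exponents of
`∑_{j ≤ p} x ^ (p * j) = (x ^ (p * (p + 1)) - 1) / (x ^ p - 1)` modulo `p + 1` maps them onto
`0, …, p`, so this sum equals `∑_{j ≤ p} x ^ j + (x ^ (p + 1) - 1) * S` where `S` is a sum of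
monomials `x ^ (p - m + (p + 1) * i)`, `i < m < p`, with pairwise distinct exponents. Dividing by
`(x ^ (p + 1) - 1) / (x - 1)` gives `P = 1 + (x - 1) * S`, whose coefficients are differences of
consecutive coefficients of `S`, all of which lie in `{0, 1}`.
-/

open Polynomial Finset

section CommRing

variable {R : Type*} [CommRing R]

def torusQuotient (x : R) (p : ℕ) : R :=
  ∑ m ∈ range p, ∑ i ∈ range m, x ^ (p - m + (p + 1) * i)

lemma pow_mul_succ_eq_pow_sub_add (x : R) {p m : ℕ} (hm : m ≤ p) :
    x ^ (p * (m + 1)) =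
      x ^ (p - m) + (x ^ (p + 1) - 1) * ∑ i ∈ range m, x ^ (p - m + (p + 1) * i) := by
  have hexp : p * (m + 1) = p - m + (p + 1) * m := by
    zify [hm]; ring
  have hfactor : ∑ i ∈ range m, x ^ (p - m + (p + 1) * i) =
      x ^ (p - m) * ∑ i ∈ range m, (x ^ (p + 1)) ^ i := by
    simp only [mul_sum, pow_add, pow_mul]
  rw [hfactor, mul_left_comm, mul_geom_sum, ← pow_mul, mul_sub, ← pow_add, ← hexp]
  ring

lemma sum_pow_mul_eq_geom_sum_add (x : R) (p : ℕ) :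
    ∑ j ∈ range (p + 1), x ^ (p * j) =
      ∑ j ∈ range (p + 1), x ^ j + (x ^ (p + 1) - 1) * torusQuotient x p := by
  have hreflect : ∑ m ∈ range p, x ^ (m + 1) = ∑ m ∈ range p, x ^ (p - m) := by
    rw [← sum_range_reflect]
    exact sum_congr rfl fun m hm => by have := mem_range.1 hm; congr 1; omega
  rw [sum_range_succ', sum_range_succ', hreflect, torusQuotient, mul_sum, add_right_comm,
    ← sum_add_distrib]
  simp only [mul_zero, pow_zero]
  congr 1
  exact sum_congr rfl fun m hm => pow_mul_succ_eq_pow_sub_add x (mem_range.1 hm).le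

lemma one_add_sub_one_mul_torusQuotient_mul (x : R) (p : ℕ) :
    (1 + (x - 1) * torusQuotient x p) * ((x ^ (p + 1) - 1) * (x ^ p - 1)) =
      (x ^ (p * (p + 1)) - 1) * (x - 1) := by
  rw [pow_mul, ← geom_sum_mul (x ^ p)]
  simp_rw [← pow_mul, sum_pow_mul_eq_geom_sum_add, ← mul_geom_sum x (p + 1)]
  ring

end CommRing

lemma coeff_sum_X_pow {R : Type*} [Semiring R] (s : Finset ℕ) (k : ℕ) :
    (∑ e ∈ s, (X : R[X]) ^ e).coeff k = if k ∈ s then 1 else 0 := by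
  simp only [finsetSum_coeff, coeff_X_pow, sum_ite_eq]

lemma injOn_sub_add_succ_mul (p : ℕ) :
    Set.InjOn (fun x : Σ _ : ℕ, ℕ => p - x.1 + (p + 1) * x.2) ((range p).sigma range) := by
  rintro ⟨m₁, i₁⟩ h₁ ⟨m₂, i₂⟩ h₂ heq
  simp only [coe_sigma, Set.mem_sigma_iff, mem_coe, mem_range] at h₁ h₂ heq
  have hmod := congrArg (· % (p + 1)) heq
  have hdiv := congrArg (· / (p + 1)) heq
  simp only [Nat.add_mul_mod_self_left, Nat.add_mul_div_left _ _ p.succ_pos] at hmod hdiv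
  rw [Nat.mod_eq_of_lt (by omega), Nat.mod_eq_of_lt (by omega)] at hmod
  rw [Nat.div_eq_of_lt (by omega), Nat.div_eq_of_lt (by omega)] at hdiv
  obtain rfl : m₁ = m₂ := by omega
  obtain rfl : i₁ = i₂ := by omega
  rfl

lemma coeff_torusQuotient_X_mem {R : Type*} [CommRing R] (p k : ℕ) :
    (torusQuotient (X : R[X]) p).coeff k ∈ ({0, 1} : Set R) := by
  rw [torusQuotient, sum_sigma', ← sum_image (injOn_sub_add_succ_mul p), coeff_sum_X_pow]
  split_ifs <;> simp

lemma coeff_one_add_X_sub_one_mul_mem {S : ℤ[X]} (hS : ∀ k, S.coeff k ∈ ({0, 1} : Set ℤ))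
    (k : ℕ) : (1 + (X - 1) * S).coeff k ∈ ({-1, 0, 1} : Set ℤ) := by
  simp only [Set.mem_insert_iff, Set.mem_singleton_iff] at hS ⊢
  rw [sub_mul, one_mul, coeff_add, coeff_sub, coeff_one]
  rcases k with _ | k
  · rw [mul_coeff_zero, coeff_X_zero]
    grind
  · rw [coeff_X_mul]
    grind

/-- For p ≥ 2, all coefficients of ((t^{p(p+1)}-1)(t-1))/((t^{p+1}-1)(t^p-1)),
the Alexander polynomial of T(p,p+1), lie in {-1, 0, 1}. -/
theorem torus_knot_alexander_coeffs (p : ℕ) (hp : 2 ≤ p) (P : Polynomial ℤ)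
    (hP : P * ((X ^ (p + 1) - 1) * (X ^ p - 1)) = (X ^ (p * (p + 1)) - 1) * (X - 1)) :
    ∀ k : ℕ, P.coeff k ∈ ({-1, 0, 1} : Set ℤ) := by
  have hne : ((X ^ (p + 1) - 1) * (X ^ p - 1) : ℤ[X]) ≠ 0 := by
    refine mul_ne_zero ?_ ?_ <;> simpa using X_pow_sub_C_ne_zero (by omega) (1 : ℤ)
  have hPQ : P = 1 + (X - 1) * torusQuotient X p :=
    mul_right_cancel₀ hne (hP.trans (one_add_sub_one_mul_torusQuotient_mul X p).symm)
  rw [hPQ]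
  exact coeff_one_add_X_sub_one_mul_mem (coeff_torusQuotient_X_mem p)
end

section
/- For coprime positive integers p, q ≥ 2, the number of nonzero coefficients of ((t^{pq}-1)(t-1))/((t^p-1)(t^q-1)) is odd, and the middle coefficient (with respect to the palindromic symmetry) is nonzero. -/
open Polynomial Finset
open scoped Classical

-- If `0 ≤ a < q` and `n = a*p + b*q`, then `n` is a nonnegative combination of `p,q`
-- iff `b ≥ 0`.
lemma tk_rep_iff (p q : ℕ) (hq : 0 < q) (hpq : Nat.Coprime p q)
    (n : ℕ) (a b : ℤ) (ha0 : 0 ≤ a) (haq : a < q) (hab : (n : ℤ) = a * p + b * q) :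
    (∃ k l : ℕ, p * k + q * l = n) ↔ 0 ≤ b := by
  constructor
  · rintro ⟨k, l, hkl⟩
    have hz : (p : ℤ) * k + q * l = a * p + b * q := by
      rw [← hab]; exact_mod_cast hkl
    have hdvd : (q : ℤ) ∣ ((k : ℤ) - a) := by
      have hco : IsCoprime (q : ℤ) (p : ℤ) := (Nat.isCoprime_iff_coprime.2 hpq).symm
      have h1 : ((k : ℤ) - a) * p = (b - l) * q := by linear_combination hz
      exact hco.dvd_of_dvd_mul_right ⟨b - l, by linarith [h1]⟩
    obtain ⟨t, ht⟩ := hdvd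
    have ht0 : 0 ≤ t := by
      by_contra hneg
      push_neg at hneg
      have : t ≤ -1 := by omega
      have hk0 : (0 : ℤ) ≤ k := by positivity
      nlinarith
    have hb : b = l + t * p := by
      have hp1 : ((k : ℤ) - a) * p = (b - l) * q := by linear_combination hz
      rw [ht] at hp1
      have hq0 : (q : ℤ) ≠ 0 := by exact_mod_cast hq.ne'
      have h2 : (t * p) * q = (b - l) * q := by linear_combination hp1
      have h3 := mul_right_cancel₀ hq0 h2
      linarith [h3]
    have : (0 : ℤ) ≤ (l : ℤ) + t * p := by positivity
    linarith [hb ▸ this]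
  · intro hb
    refine ⟨a.toNat, b.toNat, ?_⟩
    have : ((p * a.toNat + q * b.toNat : ℕ) : ℤ) = (n : ℤ) := by
      push_cast [Int.toNat_of_nonneg ha0, Int.toNat_of_nonneg hb]
      linarith [hab]
    exact_mod_cast this

-- existence of the canonical representation
lemma tk_exists_ab (p q : ℕ) (hq : 0 < q) (hpq : Nat.Coprime p q) (n : ℕ) :
    ∃ a b : ℤ, 0 ≤ a ∧ a < q ∧ (n : ℤ) = a * p + b * q := by
  have hco : IsCoprime (p : ℤ) (q : ℤ) := Nat.isCoprime_iff_coprime.2 hpq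
  obtain ⟨u, v, huv⟩ := hco
  have hq0 : (q : ℤ) ≠ 0 := by exact_mod_cast hq.ne'
  refine ⟨(n * u) % q, v * n + ((n * u) / q) * p, Int.emod_nonneg _ hq0,
    Int.emod_lt_of_pos _ (by exact_mod_cast hq), ?_⟩
  have hdm : (q : ℤ) * ((n * u) / q) + (n * u) % q = n * u := Int.mul_ediv_add_emod _ _
  linear_combination (-(n : ℤ)) * huv - (p : ℤ) * hdm

-- uniqueness of representations with small first coordinate
lemma tk_rep_unique (p q : ℕ) (hq : 0 < q) (hpq : Nat.Coprime p q)
    (k k' l l' : ℕ) (hk : k < q) (hk' : k' < q)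
    (h : p * k + q * l = p * k' + q * l') : k = k' ∧ l = l' := by
  have hz : (p : ℤ) * k + q * l = p * k' + q * l' := by exact_mod_cast h
  have hdvd : (q : ℤ) ∣ ((k : ℤ) - k') := by
    have hco : IsCoprime (q : ℤ) (p : ℤ) := (Nat.isCoprime_iff_coprime.2 hpq).symm
    exact hco.dvd_of_dvd_mul_right ⟨l' - l, by linarith [hz]⟩
  obtain ⟨t, ht⟩ := hdvd
  have hqZ : (0 : ℤ) < q := by exact_mod_cast hq
  have hkq : (k : ℤ) < q := by exact_mod_cast hk
  have hk'q : (k' : ℤ) < q := by exact_mod_cast hk'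
  have hk0 : (0 : ℤ) ≤ k := by positivity
  have hk'0 : (0 : ℤ) ≤ k' := by positivity
  have ht0 : t = 0 := by
    by_contra htne
    have : 1 ≤ t ∨ t ≤ -1 := by omega
    rcases this with h1 | h1 <;> nlinarith
  have hkk : k = k' := by
    have : (k : ℤ) = k' := by rw [ht0] at ht; linarith
    exact_mod_cast this
  refine ⟨hkk, ?_⟩
  subst hkk
  have : q * l = q * l' := by omega
  exact Nat.eq_of_mul_eq_mul_left hq this

-- coefficient of the product of the two geometric-type sums
lemma tk_coeff_AB (p q : ℕ) (hp : 0 < p) (hq : 0 < q) (hpq : Nat.Coprime p q)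
    (n : ℕ) (hn : n < p * q) :
    ((∑ k ∈ Finset.range q, (X : ℤ[X]) ^ (p * k)) *
      (∑ l ∈ Finset.range p, (X : ℤ[X]) ^ (q * l))).coeff n
      = if ∃ k l : ℕ, p * k + q * l = n then 1 else 0 := by
  rw [Finset.sum_mul_sum]
  have hco : (∑ k ∈ Finset.range q, ∑ l ∈ Finset.range p,
      (X : ℤ[X]) ^ (p * k) * X ^ (q * l)).coeff n
      = ∑ k ∈ Finset.range q, ∑ l ∈ Finset.range p,
        (if n = p * k + q * l then (1 : ℤ) else 0) := by
    rw [Polynomial.finset_sum_coeff]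
    refine Finset.sum_congr rfl fun k _ => ?_
    rw [Polynomial.finset_sum_coeff]
    refine Finset.sum_congr rfl fun l _ => ?_
    rw [← pow_add, Polynomial.coeff_X_pow]
  rw [hco]
  split_ifs with h
  · obtain ⟨k₀, l₀, hk₀⟩ := h
    have hkq : k₀ < q := by
      by_contra hge
      push_neg at hge
      have : p * q ≤ p * k₀ := Nat.mul_le_mul_left p hge
      omega
    have hlp : l₀ < p := by
      by_contra hge
      push_neg at hge
      have : q * p ≤ q * l₀ := Nat.mul_le_mul_left q hge
      have hpq' : q * p = p * q := Nat.mul_comm q p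
      omega
    rw [Finset.sum_eq_single k₀]
    · rw [Finset.sum_eq_single l₀]
      · rw [if_pos hk₀.symm]
      · intro l _ hl
        rw [if_neg]
        intro hEq
        have := tk_rep_unique p q hq hpq k₀ k₀ l₀ l hkq hkq (by omega)
        exact hl this.2.symm
      · intro habs
        exact absurd (Finset.mem_range.2 hlp) habs
    · intro k _ hk
      apply Finset.sum_eq_zero
      intro l _
      rw [if_neg]
      intro hEq
      have := tk_rep_unique p q hq hpq k k₀ l l₀ (Finset.mem_range.1 ‹k ∈ Finset.range q›) hkq (by omega)
      exact hk this.1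
    · intro habs
      exact absurd (Finset.mem_range.2 hkq) habs
  · apply Finset.sum_eq_zero
    intro k _
    apply Finset.sum_eq_zero
    intro l _
    rw [if_neg]
    intro hEq
    exact h ⟨k, l, hEq.symm⟩

-- a finset with a fixed-point-free involution has even cardinality
lemma tk_even_card (σ : ℕ → ℕ) (s : Finset ℕ)
    (h : ∀ n ∈ s, σ n ∈ s ∧ σ (σ n) = n ∧ σ n ≠ n) : Even s.card := by
  induction s using Finset.strongInduction with
  | _ s ih =>
    rcases s.eq_empty_or_nonempty with rfl | ⟨a, ha⟩
    · simp
    · obtain ⟨hσa, hσσa, hne⟩ := h a ha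
      set t := (s.erase a).erase (σ a) with ht
      have hσa' : σ a ∈ s.erase a := Finset.mem_erase.2 ⟨hne, hσa⟩
      have htsub : t ⊂ s := by
        refine Finset.ssubset_of_subset_of_ssubset ?_ (Finset.erase_ssubset ha)
        exact Finset.erase_subset _ _
      have hth : ∀ n ∈ t, σ n ∈ t ∧ σ (σ n) = n ∧ σ n ≠ n := by
        intro n hn
        have hns : n ∈ s := Finset.mem_of_mem_erase (Finset.mem_of_mem_erase hn)
        obtain ⟨h1, h2, h3⟩ := h n hns
        have hna : n ≠ σ a := (Finset.mem_erase.1 hn).1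
        have hna' : n ≠ a := (Finset.mem_erase.1 (Finset.mem_of_mem_erase hn)).1
        refine ⟨?_, h2, h3⟩
        rw [ht]
        refine Finset.mem_erase.2 ⟨?_, Finset.mem_erase.2 ⟨?_, h1⟩⟩
        · intro hEq
          exact hna' (by rw [← h2, hEq, hσσa])
        · intro hEq
          exact hna (by rw [← h2, hEq])
      have hev : Even t.card := ih t htsub hth
      have hc1 : (s.erase a).card = s.card - 1 := Finset.card_erase_of_mem ha
      have hc2 : t.card = (s.erase a).card - 1 := Finset.card_erase_of_mem hσa'
      have hpos : 0 < (s.erase a).card := Finset.card_pos.2 ⟨σ a, hσa'⟩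
      have hpos' : 0 < s.card := Finset.card_pos.2 ⟨a, ha⟩
      rw [Nat.even_iff] at hev ⊢
      omega

/-- For coprime p,q ≥ 2, the Alexander polynomial of T(p,q) has an odd number of
nonzero coefficients and its middle coefficient (with respect to the palindromic
symmetry of degree (p-1)(q-1)) is nonzero. -/
theorem torus_knot_alexander_odd_support (p q : ℕ) (hp : 2 ≤ p) (hq : 2 ≤ q)
    (hpq : Nat.Coprime p q) (P : Polynomial ℤ)
    (hP : P * ((X ^ p - 1) * (X ^ q - 1)) = (X ^ (p * q) - 1) * (X - 1)) :
    Odd P.support.card ∧ P.coeff ((p - 1) * (q - 1) / 2) ≠ 0 := by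
  have hp0 : 0 < p := by omega
  have hq0 : 0 < q := by omega
  -- basic nonvanishing
  have hmonic : ∀ n : ℕ, 0 < n → ((X : ℤ[X]) ^ n - 1).Monic := fun n hn => by
    have := Polynomial.monic_X_pow_sub_C (1 : ℤ) hn.ne'
    simpa using this
  have hXp : ((X : ℤ[X]) ^ p - 1) ≠ 0 := (hmonic p hp0).ne_zero
  have hXq : ((X : ℤ[X]) ^ q - 1) ≠ 0 := (hmonic q hq0).ne_zero
  have hXpq : ((X : ℤ[X]) ^ (p * q) - 1) ≠ 0 := (hmonic (p * q) (by positivity)).ne_zero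
  have hX1 : ((X : ℤ[X]) - 1) ≠ 0 := by
    have := hmonic 1 one_pos
    simpa using this.ne_zero
  have hndeg : ∀ n : ℕ, ((X : ℤ[X]) ^ n - 1).natDegree = n := fun n => by
    have := Polynomial.natDegree_X_pow_sub_C (n := n) (r := (1 : ℤ))
    simpa using this
  have hP0 : P ≠ 0 := by
    intro h
    rw [h, zero_mul] at hP
    exact (mul_ne_zero hXpq hX1) hP.symm
  set d := (p - 1) * (q - 1) with hd_def
  have hd : d + (p + q) = p * q + 1 := by
    obtain ⟨a, rfl⟩ := Nat.exists_eq_add_of_le hp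
    obtain ⟨b, rfl⟩ := Nat.exists_eq_add_of_le hq
    simp only [hd_def]
    have e1 : 2 + a - 1 = a + 1 := by omega
    have e2 : 2 + b - 1 = b + 1 := by omega
    rw [e1, e2]
    ring
  -- degree of P
  have hdeg : P.natDegree = d := by
    have h1 : (P * ((X ^ p - 1) * (X ^ q - 1))).natDegree
        = P.natDegree + (p + q) := by
      rw [natDegree_mul hP0 (mul_ne_zero hXp hXq), natDegree_mul hXp hXq, hndeg, hndeg]
    have h2 : (((X : ℤ[X]) ^ (p * q) - 1) * (X - 1)).natDegree = p * q + 1 := by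
      rw [natDegree_mul hXpq hX1, hndeg]
      rw [show ((X : ℤ[X]) - 1) = X - C 1 by rw [map_one], natDegree_X_sub_C]
    rw [hP] at h1
    rw [h2] at h1
    omega
  -- evenness of d
  have hdeven : 2 * (d / 2) = d := by
    have : Even d := by
      rcases Nat.even_or_odd p with hpe | hpo
      · have hqo : ¬ Even q := by
          intro hqe
          obtain ⟨a, ha⟩ := hpe
          obtain ⟨b, hb⟩ := hqe
          have : 2 ∣ Nat.gcd p q := Nat.dvd_gcd ⟨a, by omega⟩ ⟨b, by omega⟩
          rw [hpq] at this
          omega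
        rw [Nat.not_even_iff_odd] at hqo
        exact Even.mul_left (by obtain ⟨b, hb⟩ := hqo; exact ⟨b, by omega⟩) _
      · exact Even.mul_right (by obtain ⟨a, ha⟩ := hpo; exact ⟨a, by omega⟩) _
    exact Nat.two_mul_div_two_of_even this
  set m := (p - 1) * (q - 1) / 2 with hm_def
  have hmd : 2 * m = d := hdeven
  have hd2 : 2 ≤ d := by
    rcases Nat.even_or_odd p with hpe | hpo
    · -- p even hence p ≥ 2, q odd and q ≥ 3 (q=2 impossible since would share factor)
      have : q ≠ 2 := by
        intro h2
        obtain ⟨a, ha⟩ := hpe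
        have : 2 ∣ Nat.gcd p q := Nat.dvd_gcd ⟨a, by omega⟩ (by omega)
        rw [hpq] at this; omega
      have hq3 : 3 ≤ q := by omega
      calc 2 = 1 * 2 := by norm_num
        _ ≤ (p - 1) * (q - 1) := Nat.mul_le_mul (by omega) (by omega)
    · have hp3 : 3 ≤ p := by
        rcases Nat.odd_iff.mp hpo with h
        omega
      calc 2 = 2 * 1 := by norm_num
        _ ≤ (p - 1) * (q - 1) := Nat.mul_le_mul (by omega) (by omega)
  have hm1 : 1 ≤ m := by omega
  have hmltpq : m < p * q := by omega
  -- palindromic symmetry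
  have hrefl : reflect d P = P := by
    have hsub : ∀ (N n : ℕ), n ≤ N → reflect N ((X : ℤ[X]) ^ n - 1) = X ^ (N - n) - X ^ N := by
      intro N n hn
      have h1 : ((X : ℤ[X]) ^ n - 1) = X ^ n - X ^ 0 := by simp
      rw [h1]
      ext i
      rw [coeff_reflect, coeff_sub, coeff_sub, ← coeff_reflect, ← coeff_reflect,
        reflect_monomial, reflect_monomial, revAt_le hn, revAt_le (Nat.zero_le N),
        Nat.sub_zero]
    have key := congrArg (reflect (p * q + 1)) hP
    have hL : reflect (p * q + 1) (P * ((X ^ p - 1) * (X ^ q - 1)))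
        = reflect d P * ((X ^ (p - p) - X ^ p) * (X ^ (q - q) - X ^ q)) := by
      rw [show p * q + 1 = d + (p + q) from hd.symm]
      rw [Polynomial.reflect_mul _ _ (le_of_eq hdeg)
        (by rw [natDegree_mul hXp hXq, hndeg, hndeg])]
      rw [Polynomial.reflect_mul _ _ (le_of_eq (hndeg p)) (le_of_eq (hndeg q))]
      rw [hsub p p le_rfl, hsub q q le_rfl]
    have hR : reflect (p * q + 1) (((X : ℤ[X]) ^ (p * q) - 1) * (X - 1))
        = (X ^ (p * q - p * q) - X ^ (p * q)) * (X ^ (1 - 1) - X ^ 1) := by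
      rw [Polynomial.reflect_mul _ _ (le_of_eq (hndeg (p * q)))
        (by rw [show ((X : ℤ[X]) - 1) = X ^ 1 - 1 by simp, hndeg])]
      rw [hsub (p * q) (p * q) le_rfl]
      rw [show ((X : ℤ[X]) - 1) = X ^ 1 - 1 by simp, hsub 1 1 le_rfl]
    rw [hL, hR] at key
    have key2 : reflect d P * ((X ^ p - 1) * (X ^ q - 1))
        = P * ((X ^ p - 1) * (X ^ q - 1)) := by
      rw [hP]
      have hpp : p - p = 0 := by omega
      have hqq : q - q = 0 := by omega
      have hpqpq : p * q - p * q = 0 := by omega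
      have h11 : 1 - 1 = 0 := by omega
      rw [hpp, hqq, hpqpq, h11] at key
      linear_combination key
    exact mul_right_cancel₀ (mul_ne_zero hXp hXq) key2
  have hsymm : ∀ i, i ≤ d → P.coeff i = P.coeff (d - i) := by
    intro i hi
    conv_lhs => rw [← hrefl]
    rw [coeff_reflect, revAt_le hi]
  -- the key identity  P * (X^{pq} - 1) = A * B * (X - 1)
  set A := ∑ k ∈ Finset.range q, (X : ℤ[X]) ^ (p * k) with hA
  set B := ∑ l ∈ Finset.range p, (X : ℤ[X]) ^ (q * l) with hB
  have e1 : A * (X ^ p - 1) = X ^ (p * q) - 1 := by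
    have := geom_sum_mul ((X : ℤ[X]) ^ p) q
    rw [hA]
    calc (∑ k ∈ Finset.range q, (X : ℤ[X]) ^ (p * k)) * (X ^ p - 1)
        = (∑ k ∈ Finset.range q, ((X : ℤ[X]) ^ p) ^ k) * (X ^ p - 1) := by
          congr 1; exact Finset.sum_congr rfl fun k _ => by rw [← pow_mul]
      _ = ((X : ℤ[X]) ^ p) ^ q - 1 := this
      _ = X ^ (p * q) - 1 := by rw [← pow_mul]
  have e2 : B * (X ^ q - 1) = X ^ (p * q) - 1 := by
    have := geom_sum_mul ((X : ℤ[X]) ^ q) p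
    rw [hB]
    calc (∑ l ∈ Finset.range p, (X : ℤ[X]) ^ (q * l)) * (X ^ q - 1)
        = (∑ l ∈ Finset.range p, ((X : ℤ[X]) ^ q) ^ l) * (X ^ q - 1) := by
          congr 1; exact Finset.sum_congr rfl fun l _ => by rw [← pow_mul]
      _ = ((X : ℤ[X]) ^ q) ^ p - 1 := this
      _ = X ^ (q * p) - 1 := by rw [← pow_mul]
      _ = X ^ (p * q) - 1 := by rw [Nat.mul_comm]
  have EQ : P * (X ^ (p * q) - 1) = A * B * (X - 1) := by
    apply mul_right_cancel₀ hXpq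
    linear_combination (A * B) * hP - (P * B * (X ^ q - 1)) * e1 - (P * (X ^ (p * q) - 1)) * e2
  -- extract the middle coefficient
  obtain ⟨m', hm'⟩ : ∃ m', m = m' + 1 := ⟨m - 1, by omega⟩
  rw [hm'] at hmd hmltpq
  rw [hm']
  have hcoeff := congrArg (fun f : ℤ[X] => f.coeff (m' + 1)) EQ
  have hLc : (P * (X ^ (p * q) - 1)).coeff (m' + 1) = -P.coeff (m' + 1) := by
    rw [mul_sub, mul_one, coeff_sub, Polynomial.coeff_mul_X_pow']
    rw [if_neg (by omega)]
    ring
  have hRc : (A * B * (X - 1)).coeff (m' + 1)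
      = (A * B).coeff m' - (A * B).coeff (m' + 1) := by
    rw [mul_sub, mul_one, coeff_sub, Polynomial.coeff_mul_X]
  rw [hLc, hRc] at hcoeff
  -- representation dichotomy
  obtain ⟨a, b, ha0, haq, hab⟩ := tk_exists_ab p q hq0 hpq (m' + 1)
  have hcast : ((m' + 1 : ℕ) : ℤ) = (m' : ℤ) + 1 := by push_cast; ring
  have hdz : (d : ℤ) = (p : ℤ) * q + 1 - p - q := by
    have h := hd
    zify at h
    linarith
  have hmz : (2 : ℤ) * ((m' : ℤ) + 1) = d := by exact_mod_cast congrArg (Nat.cast : ℕ → ℤ) hmd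
  have hab' : ((m' : ℕ) : ℤ) = ((q : ℤ) - 1 - a) * p + (-1 - b) * q := by
    have : ((m' : ℕ) : ℤ) = ((m' + 1 : ℕ) : ℤ) - 1 := by push_cast; ring
    rw [this, hab]
    have h2m : (m' : ℤ) + 1 = a * p + b * q := by rw [← hab]; push_cast; ring
    linear_combination (-2 : ℤ) * h2m + hmz + hdz
  have hiff1 := tk_rep_iff p q hq0 hpq (m' + 1) a b ha0 haq hab
  have hiff2 := tk_rep_iff p q hq0 hpq m' ((q : ℤ) - 1 - a) (-1 - b)
    (by
      by_contra hlt
      push_neg at hlt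
      -- (q-1-a) < 0 means a > q - 1, contradicting a < q
      omega)
    (by omega) hab'
  have hAB1 := tk_coeff_AB p q hp0 hq0 hpq (m' + 1) hmltpq
  have hAB2 := tk_coeff_AB p q hp0 hq0 hpq m' (by omega)
  rw [hA, hB] at hcoeff
  have hmid : P.coeff (m' + 1) ≠ 0 := by
    rcases le_or_gt 0 b with hb | hb
    · have h1 : (if ∃ k l : ℕ, p * k + q * l = m' + 1 then (1:ℤ) else 0) = 1 :=
        if_pos (hiff1.2 hb)
      have h2 : (if ∃ k l : ℕ, p * k + q * l = m' then (1:ℤ) else 0) = 0 := by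
        rw [if_neg]
        intro hrep
        have := hiff2.1 hrep
        omega
      rw [h1] at hAB1
      rw [h2] at hAB2
      rw [hAB1, hAB2] at hcoeff
      intro h0
      rw [h0] at hcoeff
      norm_num at hcoeff
    · have h1 : (if ∃ k l : ℕ, p * k + q * l = m' + 1 then (1:ℤ) else 0) = 0 := by
        rw [if_neg]
        intro hrep
        have := hiff1.1 hrep
        omega
      have h2 : (if ∃ k l : ℕ, p * k + q * l = m' then (1:ℤ) else 0) = 1 :=
        if_pos (hiff2.2 (by omega))
      rw [h1] at hAB1
      rw [h2] at hAB2
      rw [hAB1, hAB2] at hcoeff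
      intro h0
      rw [h0] at hcoeff
      norm_num at hcoeff
  refine ⟨?_, hmid⟩
  -- parity of the support
  have hmem : (m' + 1) ∈ P.support := Polynomial.mem_support_iff.2 hmid
  have hsupp_le : ∀ n ∈ P.support, n ≤ d := by
    intro n hn
    rw [← hdeg]
    exact Polynomial.le_natDegree_of_ne_zero (Polynomial.mem_support_iff.1 hn)
  set t := P.support.erase (m' + 1) with ht
  have hteven : Even t.card := by
    apply tk_even_card (fun n => d - n)
    intro n hn
    have hns : n ∈ P.support := Finset.mem_of_mem_erase hn
    have hnm : n ≠ m' + 1 := (Finset.mem_erase.1 hn).1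
    have hnd : n ≤ d := hsupp_le n hns
    have hdn_mem : (d - n) ∈ P.support := by
      rw [Polynomial.mem_support_iff]
      rw [← hsymm n hnd]
      exact Polynomial.mem_support_iff.1 hns
    refine ⟨?_, by omega, by omega⟩
    rw [ht]
    exact Finset.mem_erase.2 ⟨by omega, hdn_mem⟩
  have hcard : P.support.card = t.card + 1 := by
    rw [ht, Finset.card_erase_of_mem hmem]
    have : 0 < P.support.card := Finset.card_pos.2 ⟨m' + 1, hmem⟩
    omega
  rw [hcard]
  exact Even.add_one hteven
end

section
/- Let p, q ≥ 2 be coprime, and let NR(p,q) be the set of nonnegative integers not representable as ap+bq with a,b ≥ 0 integers. Then ((t^{pq}-1)(t-1))/((t^p-1)(t^q-1)) = 1 + (t-1)·Σ_{k ∈ NR(p,q)} t^k. -/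
open Polynomial Classical

/-- For coprime p,q ≥ 2, the Alexander polynomial of T(p,q) satisfies
Δ(t) = 1 + (t-1)·Σ_{k ∈ NR(p,q)} t^k, where NR(p,q) is the (finite) set of
nonnegative integers not representable as ap + bq with a,b ≥ 0 (all such gaps
are < pq, so NR(p,q) is realized as a filter of Finset.range (p*q)). -/
theorem torus_knot_alexander_gaps (p q : ℕ) (hp : 2 ≤ p) (hq : 2 ≤ q)
    (hpq : Nat.Coprime p q) (P : Polynomial ℤ)
    (hP : P * ((X ^ p - 1) * (X ^ q - 1)) = (X ^ (p * q) - 1) * (X - 1)) :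
    P = 1 + (X - 1) *
      ∑ k ∈ (Finset.range (p * q)).filter
        (fun k => ¬ ∃ a b : ℕ, k = a * p + b * q), X ^ k := by
  have hp0 : 0 < p := by omega
  have hq0 : 0 < q := by omega
  have hqp : q * p = p * q := Nat.mul_comm q p
  haveI : NeZero q := ⟨by omega⟩
  -- uniqueness of representations with first coordinate < q
  have hinj : ∀ a a' b b' : ℕ, a < q → a' < q →
      a * p + b * q = a' * p + b' * q → a = a' ∧ b = b' := by
    intro a a' b b' ha ha' h
    have hcop : IsCoprime (q : ℤ) (p : ℤ) := by
      rw [Int.isCoprime_iff_gcd_eq_one]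
      simpa [Int.gcd_natCast_natCast] using hpq.symm
    have hdvd : (q : ℤ) ∣ ((a : ℤ) - a') * p := by
      refine ⟨(b' : ℤ) - b, ?_⟩
      have h' : (a : ℤ) * p + b * q = a' * p + b' * q := by exact_mod_cast h
      ring_nf
      ring_nf at h'
      linarith
    have hz : (q : ℤ) ∣ ((a : ℤ) - a') := hcop.dvd_of_dvd_mul_right hdvd
    have haZ : (a : ℤ) < q := by exact_mod_cast ha
    have haZ' : (a' : ℤ) < q := by exact_mod_cast ha'
    have h0 : ((a : ℤ) - a') = 0 := by
      refine Int.eq_zero_of_abs_lt_dvd hz ?_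
      rw [abs_lt]
      constructor <;> [linarith [Int.ofNat_nonneg a, Int.ofNat_nonneg a']; linarith [Int.ofNat_nonneg a']]
    have haa : a = a' := by exact_mod_cast sub_eq_zero.mp h0
    subst haa
    have hb : b * q = b' * q := by omega
    exact ⟨rfl, Nat.eq_of_mul_eq_mul_right hq0 hb⟩
  -- any representable number has a representation with a < q
  have hred : ∀ k : ℕ, (∃ a b : ℕ, k = a * p + b * q) →
      ∃ a b : ℕ, a < q ∧ k = a * p + b * q := by
    rintro k ⟨a, b, rfl⟩
    refine ⟨a % q, b + (a / q) * p, Nat.mod_lt a hq0, ?_⟩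
    have h := Nat.div_add_mod a q
    calc a * p + b * q = (q * (a / q) + a % q) * p + b * q := by rw [h]
      _ = (a % q) * p + (b + (a / q) * p) * q := by ring
  -- geometric sum identities
  have g1 : ((X : ℤ[X]) ^ p - 1) * (∑ a ∈ Finset.range q, X ^ (a * p)) = X ^ (p * q) - 1 := by
    calc ((X : ℤ[X]) ^ p - 1) * (∑ a ∈ Finset.range q, X ^ (a * p))
        = (∑ a ∈ Finset.range q, ((X : ℤ[X]) ^ p) ^ a) * ((X : ℤ[X]) ^ p - 1) := by
          rw [mul_comm]
          congr 1
          refine Finset.sum_congr rfl fun a _ => ?_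
          rw [← pow_mul, Nat.mul_comm]
      _ = ((X : ℤ[X]) ^ p) ^ q - 1 := geom_sum_mul _ _
      _ = X ^ (p * q) - 1 := by rw [← pow_mul]
  have g2 : ((X : ℤ[X]) ^ q - 1) * (∑ b ∈ Finset.range p, X ^ (b * q)) = X ^ (p * q) - 1 := by
    calc ((X : ℤ[X]) ^ q - 1) * (∑ b ∈ Finset.range p, X ^ (b * q))
        = (∑ b ∈ Finset.range p, ((X : ℤ[X]) ^ q) ^ b) * ((X : ℤ[X]) ^ q - 1) := by
          rw [mul_comm]
          congr 1
          refine Finset.sum_congr rfl fun b _ => ?_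
          rw [← pow_mul, Nat.mul_comm]
      _ = ((X : ℤ[X]) ^ q) ^ p - 1 := geom_sum_mul _ _
      _ = X ^ (p * q) - 1 := by rw [← pow_mul, Nat.mul_comm]
  have g3 : ((X : ℤ[X]) - 1) * (∑ k ∈ Finset.range (p * q), X ^ k) = X ^ (p * q) - 1 := by
    rw [mul_comm]
    exact geom_sum_mul _ _
  -- splitting of the full geometric sum
  have hRS : (∑ k ∈ (Finset.range (p * q)).filter (fun k => ∃ a b : ℕ, k = a * p + b * q), (X : ℤ[X]) ^ k)
      + (∑ k ∈ (Finset.range (p * q)).filter (fun k => ¬ ∃ a b : ℕ, k = a * p + b * q), (X : ℤ[X]) ^ k)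
      = ∑ k ∈ Finset.range (p * q), X ^ k :=
    Finset.sum_filter_add_sum_filter_not _ _ _
  -- the key combinatorial identity
  have key : (∑ a ∈ Finset.range q, (X : ℤ[X]) ^ (a * p)) * (∑ b ∈ Finset.range p, X ^ (b * q))
      = (∑ k ∈ (Finset.range (p * q)).filter (fun k => ∃ a b : ℕ, k = a * p + b * q), (X : ℤ[X]) ^ k)
        + X ^ (p * q) *
          ∑ k ∈ (Finset.range (p * q)).filter (fun k => ¬ ∃ a b : ℕ, k = a * p + b * q), X ^ k := by
    rw [Finset.sum_mul_sum, ← Finset.sum_product']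
    rw [← Finset.sum_filter_add_sum_filter_not ((Finset.range q) ×ˢ (Finset.range p))
      (fun ab => ab.1 * p + ab.2 * q < p * q)]
    congr 1
    · -- representable part
      refine Finset.sum_bij (fun ab _ => ab.1 * p + ab.2 * q) ?_ ?_ ?_ ?_
      · rintro ⟨a, b⟩ hab
        simp only [Finset.mem_filter, Finset.mem_product, Finset.mem_range] at hab ⊢
        exact ⟨hab.2, a, b, rfl⟩
      · rintro ⟨a, b⟩ hab ⟨a', b'⟩ hab' h
        simp only [Finset.mem_filter, Finset.mem_product, Finset.mem_range] at hab hab'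
        have := hinj a a' b b' hab.1.1 hab'.1.1 h
        simp [this.1, this.2]
      · intro k hk
        simp only [Finset.mem_filter, Finset.mem_range] at hk
        obtain ⟨a, b, ha, hk'⟩ := hred k hk.2
        have hb : b < p := by
          have hbq : b * q < p * q := by
            have : b * q ≤ k := by omega
            omega
          exact Nat.lt_of_mul_lt_mul_right hbq
        refine ⟨⟨a, b⟩, ?_, hk'.symm⟩
        simp only [Finset.mem_filter, Finset.mem_product, Finset.mem_range]
        exact ⟨⟨ha, hb⟩, by omega⟩
      · intro ab hab
        rw [pow_add]
    · -- non-representable part, shifted by p*q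
      rw [Finset.mul_sum]
      simp_rw [← pow_add]
      refine Finset.sum_bij (fun ab _ => ab.1 * p + ab.2 * q - p * q) ?_ ?_ ?_ ?_
      · rintro ⟨a, b⟩ hab
        simp only [Finset.mem_filter, Finset.mem_product, Finset.mem_range, not_lt] at hab ⊢
        obtain ⟨⟨ha, hb⟩, hge⟩ := hab
        have h1 : a * p < q * p := Nat.mul_lt_mul_of_lt_of_le ha (le_refl p) hp0
        have h2 : b * q < p * q := Nat.mul_lt_mul_of_lt_of_le hb (le_refl q) hq0
        have hqp : q * p = p * q := Nat.mul_comm q p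
        constructor
        · omega
        · rintro ⟨a', b', hk⟩
          obtain ⟨a'', b'', ha'', hk''⟩ := hred _ ⟨a', b', hk⟩
          have heq : a * p + b * q = a'' * p + (b'' + p) * q := by
            have : (b'' + p) * q = b'' * q + p * q := by ring
            omega
          have := hinj a a'' b (b'' + p) ha ha'' heq
          omega
      · rintro ⟨a, b⟩ hab ⟨a', b'⟩ hab' h
        simp only [Finset.mem_filter, Finset.mem_product, Finset.mem_range, not_lt] at hab hab'
        dsimp only at h
        have heq : a * p + b * q = a' * p + b' * q := by omega
        have := hinj a a' b b' hab.1.1 hab'.1.1 heq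
        simp [this.1, this.2]
      · intro k hk
        simp only [Finset.mem_filter, Finset.mem_range] at hk
        obtain ⟨hklt, hnot⟩ := hk
        set a : ℕ := (((k + p * q : ℕ) : ZMod q) * ((p : ℕ) : ZMod q)⁻¹).val with hadef
        have ha : a < q := ZMod.val_lt _
        have hmod : ((a * p : ℕ) : ZMod q) = ((k + p * q : ℕ) : ZMod q) := by
          push_cast
          rw [hadef, ZMod.natCast_rightInverse _]
          rw [mul_assoc, mul_comm (((p : ℕ) : ZMod q))⁻¹ _, ZMod.coe_mul_inv_eq_one p hpq,
            mul_one]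
          push_cast
          ring
        have hap_lt : a * p < p * q := by
          have : a * p < q * p := Nat.mul_lt_mul_of_lt_of_le ha (le_refl p) hp0
          omega
        have hap_le : a * p ≤ k + p * q := by omega
        have hdvd : q ∣ (k + p * q - a * p) :=
          (Nat.modEq_iff_dvd' hap_le).mp ((ZMod.natCast_eq_natCast_iff _ _ _).mp hmod)
        obtain ⟨c, hc⟩ := hdvd
        have hsum : a * p + q * c = k + p * q := by omega
        by_cases hak : a * p ≤ k
        · exfalso
          have hpc : p ≤ c := by
            have : q * p ≤ q * c := by omega
            exact Nat.le_of_mul_le_mul_left this hq0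
          obtain ⟨d, rfl⟩ : ∃ d, c = d + p := ⟨c - p, by omega⟩
          refine hnot ⟨a, d, ?_⟩
          have h1 : q * (d + p) = q * d + q * p := by ring
          have h2 : q * d = d * q := Nat.mul_comm _ _
          omega
        · have hc_lt : c < p := by
            have : q * c < q * p := by omega
            exact Nat.lt_of_mul_lt_mul_left this
          refine ⟨⟨a, c⟩, ?_, ?_⟩
          · simp only [Finset.mem_filter, Finset.mem_product, Finset.mem_range, not_lt]
            have : c * q = q * c := Nat.mul_comm _ _
            exact ⟨⟨ha, hc_lt⟩, by omega⟩
          · dsimp only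
            have hcq : c * q = q * c := Nat.mul_comm _ _
            omega
      · rintro ⟨a, b⟩ hab
        simp only [Finset.mem_filter, Finset.mem_product, Finset.mem_range, not_lt] at hab
        dsimp only
        congr 1
        omega
  -- nonzero divisors
  have hX1 : ((X : ℤ[X]) ^ p - 1) ≠ 0 := by
    have := X_pow_sub_C_ne_zero (R := ℤ) (n := p) (by omega) 1
    simpa using this
  have hX2 : ((X : ℤ[X]) ^ q - 1) ≠ 0 := by
    have := X_pow_sub_C_ne_zero (R := ℤ) (n := q) (by omega) 1
    simpa using this
  have hG : ((X : ℤ[X]) ^ (p * q) - 1) ≠ 0 := by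
    have := X_pow_sub_C_ne_zero (R := ℤ) (n := p * q) (Nat.mul_pos hp0 hq0) 1
    simpa using this
  have hD : ((X : ℤ[X]) ^ p - 1) * ((X : ℤ[X]) ^ q - 1) ≠ 0 := mul_ne_zero hX1 hX2
  apply mul_right_cancel₀ hD
  rw [hP]
  apply mul_left_cancel₀ hG
  linear_combination (norm := ring)
    ((X : ℤ[X]) - 1) * ((X : ℤ[X]) ^ p - 1) * ((X : ℤ[X]) ^ q - 1) * key
    - ((X : ℤ[X]) - 1) * ((X : ℤ[X]) ^ q - 1) * (∑ b ∈ Finset.range p, (X : ℤ[X]) ^ (b * q)) * g1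
    - ((X : ℤ[X]) - 1) * ((X : ℤ[X]) ^ (p * q) - 1) * g2
    + ((X : ℤ[X]) ^ p - 1) * ((X : ℤ[X]) ^ q - 1) * g3
    + ((X : ℤ[X]) - 1) * ((X : ℤ[X]) ^ p - 1) * ((X : ℤ[X]) ^ q - 1) * hRS
end
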